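/- arXiv:2201.00851 — 2 statements merged into one kernel-verified Lean document; each statement's English description precedes it below -/
import Mathlib

section
/- Let f be an admissible evaluation function and suppose N ≥ 2 is such that the Hermitian Toeplitz matrix Φ^N is positive definite (which holds for all sufficiently large N). Then for every z ∈ ℂ with Im z > 0 there exists exactly one M ∈ ℂ with Im M > 0 such that M·Φ^N + z·1 is invertible and M = −N^{−1} Tr((M·Φ^N + z·1)^{−1}); equivalently, M solves −M^{−1} m_{Φ^N}(−z/M) = M, where m_{Φ^N}(w) = N^{−1} Tr((Φ^N − w·1)^{−1}). -/
open MeasureTheory Complex Filter ProbabilityTheory Matrix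
open scoped ENNReal NNReal ComplexOrder

noncomputable section

/-- The `k`-th Fourier coefficient of a `1`-periodic function `f : ℝ → ℂ`. -/
def fCoeff (f : ℝ → ℂ) (k : ℤ) : ℂ :=
  ∫ y in (0:ℝ)..1, f y * Complex.exp (-(2 * (Real.pi : ℂ) * Complex.I * (k : ℂ) * (y : ℂ)))

/-- The function `g_f(x) = ∑_{n odd} |∑_{k ≥ 0} c_{n 2^k} e^{2πikx}|²`. -/
def gFun (f : ℝ → ℂ) (x : ℝ) : ℝ :=
  ∑' n : ℕ, if Odd n then
    ‖∑' k : ℕ, fCoeff f ((n : ℤ) * 2 ^ k) *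
      Complex.exp (2 * (Real.pi : ℂ) * Complex.I * (k : ℂ) * (x : ℂ))‖ ^ 2
  else 0

/-- Admissible evaluation function: `1`-periodic (i.e. a function on ℝ/ℤ), `C²`,
mean zero, and `g_f` uniformly bounded below on `[0,1]`. -/
def Admissible (f : ℝ → ℂ) : Prop :=
  Function.Periodic f 1 ∧ ContDiff ℝ 2 f ∧ (∫ y in (0:ℝ)..1, f y) = 0 ∧
    ∃ g₀ : ℝ, 0 < g₀ ∧ ∀ x ∈ Set.Icc (0:ℝ) 1, g₀ ≤ gFun f x

/-- The doubling map `T(x) = 2x mod 1`. -/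
def dbl (x : ℝ) : ℝ := Int.fract (2 * x)

/-- The dynamically defined matrix `X_{ij} = N^{-1/2} f(T^{2N(i-1)+j} x)`, `1 ≤ i,j ≤ N`. -/
def Xmat (N : ℕ) (f : ℝ → ℂ) (x : ℝ) : Matrix (Fin N) (Fin N) ℂ :=
  Matrix.of fun i j => ((Real.sqrt N : ℝ) : ℂ)⁻¹ * f (dbl^[2 * N * i.val + j.val + 1] x)

/-- The Hermitization `H_X = [[0, X], [X†, 0]]`. -/
def HX (N : ℕ) (f : ℝ → ℂ) (x : ℝ) :
    Matrix (Fin N ⊕ Fin N) (Fin N ⊕ Fin N) ℂ :=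
  Matrix.fromBlocks 0 (Xmat N f x) (Xmat N f x)ᴴ 0

/-- Normalized trace of the resolvent: `card⁻¹ Tr (H - z)⁻¹`. -/
def stT {ι : Type} [Fintype ι] [DecidableEq ι] (H : Matrix ι ι ℂ) (z : ℂ) : ℂ :=
  (Fintype.card ι : ℂ)⁻¹ * Matrix.trace (H - z • (1 : Matrix ι ι ℂ))⁻¹

/-- The uniform probability measure on `[0,1]`. -/
def unif : Measure ℝ := volume.restrict (Set.Icc 0 1)

/-- `L = ⌊(log₂ N)^6⌋`. -/
def LL (N : ℕ) : ℕ := Nat.floor ((Real.logb 2 N) ^ 6)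

/-- The `n`-th binary digit of `x` (for `x ∈ [0,1)`): `d_n = ⌊2^n x⌋ mod 2`. -/
def bdigit (x : ℝ) (n : ℕ) : ℕ := (Int.floor (2 ^ n * x)).toNat % 2

/-- The resampled point `y_k = ∑_{n=1}^{L} d_{n+k} 2^{-n} + ∑_{n > L} b_n^k 2^{-n}`. -/
def yk (N : ℕ) (x : ℝ) (b : ℕ × ℕ → Bool) (k : ℕ) : ℝ :=
  (∑ n ∈ Finset.Icc 1 (LL N), (bdigit x (n + k) : ℝ) / 2 ^ n) +
  ∑' n : ℕ, if LL N < n then (if b (n, k) then (1:ℝ) / 2 ^ n else 0) else 0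

/-- The resampled matrix `Y_{ij} = N^{-1/2} f(y_{2N(i-1)+j})`. -/
def Ymat (N : ℕ) (f : ℝ → ℂ) (x : ℝ) (b : ℕ × ℕ → Bool) : Matrix (Fin N) (Fin N) ℂ :=
  Matrix.of fun i j => ((Real.sqrt N : ℝ) : ℂ)⁻¹ * f (yk N x b (2 * N * i.val + j.val + 1))

/-- The Hermitization `H_Y = [[0, Y], [Y†, 0]]`. -/
def HY (N : ℕ) (f : ℝ → ℂ) (x : ℝ) (b : ℕ × ℕ → Bool) :
    Matrix (Fin N ⊕ Fin N) (Fin N ⊕ Fin N) ℂ :=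
  Matrix.fromBlocks 0 (Ymat N f x b) (Ymat N f x b)ᴴ 0

/-- `H_Y` reindexed over `Fin (N + N)`. -/
def HY2 (N : ℕ) (f : ℝ → ℂ) (x : ℝ) (b : ℕ × ℕ → Bool) :
    Matrix (Fin (N + N)) (Fin (N + N)) ℂ :=
  Matrix.reindex finSumFinEquiv finSumFinEquiv (HY N f x b)

/-- The fair-coin measure on `Bool`. -/
def bern : Measure Bool := (2:ℝ≥0∞)⁻¹ • Measure.dirac true + (2:ℝ≥0∞)⁻¹ • Measure.dirac false

/-- Auxiliary index type: `none` indexes the uniform point `x`, `some (n,k)` the bit `b_n^k`. -/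
def mixType : Option (ℕ × ℕ) → Type
  | none => ℝ
  | some _ => Bool

def mixMS : (o : Option (ℕ × ℕ)) → MeasurableSpace (mixType o)
  | none => (inferInstance : MeasurableSpace ℝ)
  | some _ => (inferInstance : MeasurableSpace Bool)

def mixFam {Ω : Type} (X : Ω → ℝ) (B : Ω → ℕ × ℕ → Bool) :
    (o : Option (ℕ × ℕ)) → Ω → mixType o
  | none => X
  | some p => fun ω => B ω p

/-- A probability space carrying a uniform point `X` on `[0,1]` together with an
independent array of i.i.d. fair bits `B`, all jointly independent: this realizes the
product of the uniform measure on `[0,1]` with the Bernoulli(1/2) product measure. -/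
def IsResamplingSpace {Ω : Type} [MeasurableSpace Ω] (μ : Measure Ω)
    (X : Ω → ℝ) (B : Ω → ℕ × ℕ → Bool) : Prop :=
  IsProbabilityMeasure μ ∧ Measure.map X μ = unif ∧
  (∀ p : ℕ × ℕ, Measure.map (fun ω => B ω p) μ = bern) ∧
  ProbabilityTheory.iIndepFun (m := mixMS) (mixFam X B) μ

open Classical in
/-- Eigenvalues (with multiplicity) of a Hermitian matrix, as a total function. -/
def eigs {ι : Type} [Fintype ι] [DecidableEq ι] (A : Matrix ι ι ℂ) : ι → ℝ :=
  if h : A.IsHermitian then h.eigenvalues else 0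

/-- `S_O(H; E, ρ) = 𝔼[ ∑_{injective tuples} O(2Nρ(λ_{i_1}-E), …) ]` where `2N = card ι`. -/
def SO {Ω ι : Type} [MeasurableSpace Ω] [Fintype ι] [DecidableEq ι]
    (μ : Measure Ω) (H : Ω → Matrix ι ι ℂ) {k : ℕ} (O : (Fin k → ℝ) → ℝ) (E ρ : ℝ) : ℝ :=
  ∫ ω, (∑ t : Fin k ↪ ι, O fun a => (Fintype.card ι : ℝ) * ρ * (eigs (H ω) (t a) - E)) ∂μ

/-- Index type for the independent Gaussian entries of a GUE matrix. -/
def GUEidx (n : ℕ) : Type := Fin n ⊕ ({p : Fin n × Fin n // p.1 < p.2} × Bool)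

/-- The family of real random variables built from the entries of a random matrix. -/
def GUEfam {n : ℕ} {Ω : Type} (W : Ω → Matrix (Fin n) (Fin n) ℂ) : GUEidx n → Ω → ℝ
  | .inl i => fun ω => (W ω i i).re
  | .inr (p, true) => fun ω => (W ω p.1.1 p.1.2).re
  | .inr (p, false) => fun ω => (W ω p.1.1 p.1.2).im

/-- `W` is a normalized `n × n` GUE matrix (`n = 2N`): Hermitian, the entries on and above
the diagonal are independent centered Gaussians, diagonal entries real with variance `1/n`,
and the real and imaginary parts of the above-diagonal entries each of variance `1/(2n)`. -/
def IsGUE (n : ℕ) {Ω : Type} [MeasurableSpace Ω] (μ : Measure Ω)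
    (W : Ω → Matrix (Fin n) (Fin n) ℂ) : Prop :=
  (∀ ω, (W ω).IsHermitian) ∧
  (∀ i j, Measurable fun ω => W ω i j) ∧
  ProbabilityTheory.iIndepFun (m := fun _ : GUEidx n => (inferInstance : MeasurableSpace ℝ))
    (GUEfam W) μ ∧
  (∀ i : Fin n, Measure.map (fun ω => (W ω i i).re) μ =
    ProbabilityTheory.gaussianReal 0 ((n : ℝ≥0))⁻¹) ∧
  (∀ p : {p : Fin n × Fin n // p.1 < p.2},
    Measure.map (fun ω => (W ω p.1.1 p.1.2).re) μ =
      ProbabilityTheory.gaussianReal 0 ((2 * n : ℝ≥0))⁻¹ ∧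
    Measure.map (fun ω => (W ω p.1.1 p.1.2).im) μ =
      ProbabilityTheory.gaussianReal 0 ((2 * n : ℝ≥0))⁻¹)

/-- The semicircle density `ρ_sc(E) = (2π)⁻¹ √((4 - E²)₊)`. -/
def rhoSC (E : ℝ) : ℝ := (2 * Real.pi)⁻¹ * Real.sqrt (4 - E ^ 2)

open Classical in
/-- `H^{(U)}`: the matrix `H` with all rows and columns indexed by `U` replaced by `0`. -/
def minorMat {n : ℕ} (H : Matrix (Fin n) (Fin n) ℂ) (U : Finset (Fin n)) :
    Matrix (Fin n) (Fin n) ℂ :=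
  Matrix.of fun i j => if i ∈ U ∨ j ∈ U then 0 else H i j

/-- `A|_{S,T}`: the submatrix with rows in `S` and columns in `T`. -/
def subM {n : ℕ} (A : Matrix (Fin n) (Fin n) ℂ) (S T : Finset (Fin n)) :
    Matrix S T ℂ :=
  A.submatrix (fun a : S => (a : Fin n)) (fun a : T => (a : Fin n))

/-- The operator norm of a matrix, induced by the Euclidean norm. -/
def opNorm {ι : Type} [Fintype ι] [DecidableEq ι] (A : Matrix ι ι ℂ) : ℝ :=
  ‖Matrix.toEuclideanCLM (𝕜 := ℂ) A‖

/-- `φ(j) = ∑_{k ≥ 1} conj(c_k) c_{k 2^j}` for `j ≥ 0`. -/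
def phiP (f : ℝ → ℂ) (j : ℕ) : ℂ :=
  ∑' k : ℕ, (starRingEnd ℂ) (fCoeff f ((k : ℤ) + 1)) * fCoeff f (((k : ℤ) + 1) * 2 ^ j)

/-- `φ(j)` for `j ∈ ℤ`, with `φ(-j) = conj φ(j)`. -/
def phiZ (f : ℝ → ℂ) (j : ℤ) : ℂ :=
  if 0 ≤ j then phiP f j.toNat else (starRingEnd ℂ) (phiP f (-j).toNat)

open Classical in
/-- The banded Toeplitz correlation matrix `Φ^N`. -/
def PhiN (f : ℝ → ℂ) (N : ℕ) : Matrix (Fin N) (Fin N) ℂ :=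
  Matrix.of fun i j =>
    if ((|(i : ℤ) - (j : ℤ)| : ℤ) : ℝ) ≤ (Real.logb 2 N) ^ 6 then phiZ f ((i : ℤ) - (j : ℤ))
    else 0

/-- The stochastic control parameter `Γ = max(1, max_{a,b} |G_{ab}|)`. -/
def GammaP {ι : Type} [Fintype ι] (G : Matrix ι ι ℂ) : ℝ :=
  max 1 (sSup {r : ℝ | ∃ a b, r = ‖G a b‖})

open Classical in
/-- The stochastic control parameter `γ`: the largest operator norm of `(G^{(J)}|_{I,I})⁻¹`
over windows `I, J` of radius `W` around an index `i`. -/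
def gammaP {n : ℕ} (W : ℝ) (H : Matrix (Fin n) (Fin n) ℂ) (z : ℂ) : ℝ :=
  max 1 (sSup {r : ℝ | ∃ (i : Fin n) (I J : Finset (Fin n)), Disjoint I J ∧
    (∀ a ∈ I, |(a.val : ℝ) - (i.val : ℝ)| ≤ W) ∧
    (∀ a ∈ J, |(a.val : ℝ) - (i.val : ℝ)| ≤ W) ∧
    r = opNorm ((subM ((minorMat H J - z • 1)⁻¹) I I)⁻¹)})

/-- Max of the absolute values of the entries of a matrix. -/
def entMax {n : ℕ} (A : Matrix (Fin n) (Fin n) ℂ) : ℝ :=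
  ⨆ i, ⨆ j, ‖A i j‖

end

/-!
Diagonalising `Φ^N` turns the matrix equation into the scalar fixed-point problem `M = F M`,
`F M = -N⁻¹ ∑ᵢ (M λᵢ + z)⁻¹`, where the `λᵢ > 0` are the eigenvalues of `Φ^N`.
With `s M = N⁻¹ ∑ᵢ λᵢ / |M λᵢ + z|²`, Cauchy–Schwarz gives
`|F M₁ - F M₂|² ≤ |M₁ - M₂|² s M₁ s M₂`, and the imaginary part of `M = F M` reads
`Im M = s M · Im M + Im z · N⁻¹ ∑ᵢ |M λᵢ + z|⁻²`, so `s M < 1` at a fixed point: uniqueness.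
For existence, `F` maps `{Im M ≥ 0, |M| ≤ 1 / Im z}` into itself with `Im (F M) ≥ c > 0`, and
there `Im M · s M ≤ q · Im (F M)` with `q = 1 - c Im z < 1`. Hence `F` contracts the
hyperbolic quantity `|M₁ - M₂|² / (Im M₁ Im M₂)` by `q²`, and the iterates of `F` converge.
-/

namespace Matrix.IsHermitian
open Unitary
variable {𝕜 n : Type*} [RCLike 𝕜] [Fintype n] [DecidableEq n] {A : Matrix n n 𝕜}

lemma smul_add_smul_one_eq_conjStarAlgAut (hA : A.IsHermitian) (a b : 𝕜) :
    a • A + b • 1 = conjStarAlgAut 𝕜 _ hA.eigenvectorUnitary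
      (diagonal fun i => a * hA.eigenvalues i + b) := by
  conv_lhs => rw [hA.spectral_theorem]
  rw [← map_smul, ← map_one (conjStarAlgAut 𝕜 _ hA.eigenvectorUnitary), ← map_smul, ← map_add]
  congr 1
  ext i j
  by_cases hij : i = j <;> simp [hij]

lemma isUnit_smul_add_smul_one (hA : A.IsHermitian) {a b : 𝕜}
    (h : ∀ i, a * hA.eigenvalues i + b ≠ 0) : IsUnit (a • A + b • 1) := by
  rw [hA.smul_add_smul_one_eq_conjStarAlgAut]
  exact (isUnit_diagonal.mpr (Pi.isUnit_iff.mpr fun i => (h i).isUnit)).map _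

lemma trace_inv_smul_add_smul_one (hA : A.IsHermitian) {a b : 𝕜}
    (h : ∀ i, a * hA.eigenvalues i + b ≠ 0) :
    trace (a • A + b • 1)⁻¹ = ∑ i, (a * hA.eigenvalues i + b)⁻¹ := by
  set φ := conjStarAlgAut 𝕜 (Matrix n n 𝕜) hA.eigenvectorUnitary
  have hinv : (φ (diagonal fun i => a * hA.eigenvalues i + b))⁻¹ =
      φ (diagonal fun i => (a * hA.eigenvalues i + b)⁻¹) := by
    refine inv_eq_right_inv ?_
    rw [← map_mul, diagonal_mul_diagonal, ← map_one φ]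
    congr 1
    convert diagonal_one with i
    exact mul_inv_cancel₀ (h i)
  rw [hA.smul_add_smul_one_eq_conjStarAlgAut, hinv, conjStarAlgAut_apply, trace_mul_cycle,
    coe_star_mul_self, one_mul, trace_diagonal]
end Matrix.IsHermitian

section SelfConsistent

variable {ι : Type*} [Fintype ι] {lam : ι → ℝ} {z M M₁ M₂ : ℂ}

noncomputable def selfConsistentMap (lam : ι → ℝ) (z M : ℂ) : ℂ :=
  -(Fintype.card ι : ℂ)⁻¹ * ∑ i, (M * lam i + z)⁻¹

noncomputable def meanWeightedInvNormSq (lam : ι → ℝ) (z M : ℂ) : ℝ :=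
  (Fintype.card ι : ℝ)⁻¹ * ∑ i, lam i / normSq (M * lam i + z)

noncomputable def meanInvNormSq (lam : ι → ℝ) (z M : ℂ) : ℝ :=
  (Fintype.card ι : ℝ)⁻¹ * ∑ i, (normSq (M * lam i + z))⁻¹

lemma im_le_im_mul_ofReal_add {a : ℝ} (ha : 0 ≤ a) (hM : 0 ≤ M.im) :
    z.im ≤ (M * a + z).im := by
  simpa using mul_nonneg hM ha

lemma mul_ofReal_add_ne_zero {a : ℝ} (ha : 0 ≤ a) (hM : 0 ≤ M.im) (hz : 0 < z.im) :
    M * a + z ≠ 0 := fun h => by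
  simpa [h] using hz.trans_le (im_le_im_mul_ofReal_add ha hM)

lemma im_selfConsistentMap (lam : ι → ℝ) (z M : ℂ) :
    (selfConsistentMap lam z M).im =
      M.im * meanWeightedInvNormSq lam z M + z.im * meanInvNormSq lam z M := by
  have hc : -(Fintype.card ι : ℂ)⁻¹ = ((-(Fintype.card ι : ℝ)⁻¹ : ℝ) : ℂ) := by push_cast; rfl
  rw [selfConsistentMap, hc, Complex.im_ofReal_mul, Complex.im_sum, meanWeightedInvNormSq,
    meanInvNormSq]
  simp only [Finset.mul_sum, ← Finset.sum_add_distrib]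
  refine Finset.sum_congr rfl fun i _ => ?_
  simp only [Complex.inv_im, Complex.add_im, Complex.mul_im, Complex.ofReal_re, Complex.ofReal_im]
  ring

lemma meanWeightedInvNormSq_nonneg (hlam : 0 ≤ lam) : 0 ≤ meanWeightedInvNormSq lam z M :=
  mul_nonneg (by positivity) <| Finset.sum_nonneg fun i _ => div_nonneg (hlam i) (normSq_nonneg _)

lemma meanInvNormSq_pos [Nonempty ι] (hw : ∀ i, M * lam i + z ≠ 0) :
    0 < meanInvNormSq lam z M :=
  mul_pos (by positivity) <| Finset.sum_pos (fun i _ => inv_pos.mpr (normSq_pos.mpr (hw i)))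
    Finset.univ_nonempty

lemma norm_selfConsistentMap_le (hlam : 0 ≤ lam) (hz : 0 < z.im) (hM : 0 ≤ M.im) :
    ‖selfConsistentMap lam z M‖ ≤ z.im⁻¹ := by
  have hterm : ∀ i, ‖(M * lam i + z)⁻¹‖ ≤ z.im⁻¹ := fun i => by
    rw [norm_inv]
    exact inv_anti₀ hz ((im_le_im_mul_ofReal_add (hlam i) hM).trans (Complex.im_le_norm _))
  calc ‖selfConsistentMap lam z M‖
      ≤ (Fintype.card ι : ℝ)⁻¹ * ∑ _i : ι, z.im⁻¹ := by
        rw [selfConsistentMap, norm_mul, norm_neg, norm_inv, Complex.norm_natCast]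
        gcongr
        exact (norm_sum_le _ _).trans (Finset.sum_le_sum fun i _ => hterm i)
    _ ≤ z.im⁻¹ := by
        rw [Finset.sum_const, Finset.card_univ, nsmul_eq_mul, ← mul_assoc]
        exact mul_le_of_le_one_left (by positivity) (inv_mul_le_one (G₀ := ℝ))

lemma norm_sub_selfConsistentMap_sq_le (hlam : 0 ≤ lam) (h₁ : ∀ i, M₁ * lam i + z ≠ 0)
    (h₂ : ∀ i, M₂ * lam i + z ≠ 0) :
    ‖selfConsistentMap lam z M₁ - selfConsistentMap lam z M₂‖ ^ 2 ≤
      ‖M₁ - M₂‖ ^ 2 * (meanWeightedInvNormSq lam z M₁ * meanWeightedInvNormSq lam z M₂) := by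
  set w₁ := fun i => M₁ * lam i + z
  set w₂ := fun i => M₂ * lam i + z
  have hdiff : selfConsistentMap lam z M₁ - selfConsistentMap lam z M₂ =
      (M₁ - M₂) * ((Fintype.card ι : ℂ)⁻¹ * ∑ i, lam i * ((w₁ i)⁻¹ * (w₂ i)⁻¹)) := by
    simp only [selfConsistentMap, ← mul_sub, ← Finset.sum_sub_distrib, Finset.mul_sum]
    refine Finset.sum_congr rfl fun i _ => ?_
    rw [inv_sub_inv (h₁ i) (h₂ i)]
    field_simp
    ring
  have hCS : (∑ i, ‖(lam i : ℂ) * ((w₁ i)⁻¹ * (w₂ i)⁻¹)‖) ^ 2 ≤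
      (∑ i, lam i / normSq (w₁ i)) * ∑ i, lam i / normSq (w₂ i) := by
    refine Finset.sum_sq_le_sum_mul_sum_of_sq_le_mul _
      (fun i _ => div_nonneg (hlam i) (normSq_nonneg _))
      (fun i _ => div_nonneg (hlam i) (normSq_nonneg _)) fun i _ => le_of_eq ?_
    rw [norm_mul, norm_mul, norm_inv, norm_inv, Complex.norm_real, Real.norm_eq_abs,
      abs_of_nonneg (hlam i), ← Complex.sq_norm, ← Complex.sq_norm]
    ring
  rw [hdiff, norm_mul, mul_pow, norm_mul, norm_inv, Complex.norm_natCast]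
  gcongr
  calc ((Fintype.card ι : ℝ)⁻¹ * ‖∑ i, (lam i : ℂ) * ((w₁ i)⁻¹ * (w₂ i)⁻¹)‖) ^ 2
      ≤ ((Fintype.card ι : ℝ)⁻¹ * ∑ i, ‖(lam i : ℂ) * ((w₁ i)⁻¹ * (w₂ i)⁻¹)‖) ^ 2 := by
        gcongr
        exact norm_sum_le _ _
    _ ≤ (Fintype.card ι : ℝ)⁻¹ ^ 2 *
          ((∑ i, lam i / normSq (w₁ i)) * ∑ i, lam i / normSq (w₂ i)) := by
        rw [mul_pow]
        gcongr
    _ = _ := by rw [meanWeightedInvNormSq, meanWeightedInvNormSq]; ring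

lemma meanWeightedInvNormSq_lt_one_of_fixed [Nonempty ι] (hlam : 0 ≤ lam) (hz : 0 < z.im)
    (hM : 0 < M.im) (hfix : selfConsistentMap lam z M = M) :
    meanWeightedInvNormSq lam z M < 1 := by
  have ht := meanInvNormSq_pos fun i => mul_ofReal_add_ne_zero (hlam i) hM.le hz
  have him := im_selfConsistentMap lam z M
  rw [hfix] at him
  nlinarith [mul_pos hz ht]

lemma eq_of_selfConsistentMap_eq [Nonempty ι] (hlam : 0 ≤ lam) (hz : 0 < z.im)
    (hM₁ : 0 < M₁.im) (hM₂ : 0 < M₂.im) (hfix₁ : selfConsistentMap lam z M₁ = M₁)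
    (hfix₂ : selfConsistentMap lam z M₂ = M₂) : M₁ = M₂ := by
  have hs₁ := meanWeightedInvNormSq_lt_one_of_fixed hlam hz hM₁ hfix₁
  have hs₂ := meanWeightedInvNormSq_lt_one_of_fixed hlam hz hM₂ hfix₂
  have h := norm_sub_selfConsistentMap_sq_le hlam
    (fun i => mul_ofReal_add_ne_zero (hlam i) hM₁.le hz)
    (fun i => mul_ofReal_add_ne_zero (hlam i) hM₂.le hz)
  rw [hfix₁, hfix₂] at h
  have hprod : meanWeightedInvNormSq lam z M₁ * meanWeightedInvNormSq lam z M₂ < 1 := by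
    nlinarith [meanWeightedInvNormSq_nonneg (z := z) (M := M₁) hlam,
      meanWeightedInvNormSq_nonneg (z := z) (M := M₂) hlam]
  have : ‖M₁ - M₂‖ ^ 2 = 0 := by nlinarith [sq_nonneg ‖M₁ - M₂‖]
  simpa [sub_eq_zero] using this

lemma continuousAt_selfConsistentMap (hlam : 0 ≤ lam) (hz : 0 < z.im) (hM : 0 ≤ M.im) :
    ContinuousAt (selfConsistentMap lam z) M := by
  unfold selfConsistentMap
  fun_prop (disch := exact mul_ofReal_add_ne_zero (hlam _) hM hz)

/-- On `{Im M ≥ 0, ‖M‖ ≤ 1 / Im z}` every `‖M λᵢ + z‖` is at most `(∑ λ) / Im z + ‖z‖`,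
so `Im z` divided by the square of this bound minorises `Im (selfConsistentMap lam z M)`. -/
noncomputable def imLowerBound (lam : ι → ℝ) (z : ℂ) : ℝ :=
  z.im / (z.im⁻¹ * ∑ i, lam i + ‖z‖) ^ 2

noncomputable def contractionFactor (lam : ι → ℝ) (z : ℂ) : ℝ :=
  1 - imLowerBound lam z * z.im

lemma imLowerBound_pos (hlam : 0 ≤ lam) (hz : 0 < z.im) : 0 < imLowerBound lam z := by
  have : 0 < ‖z‖ := hz.trans_le (Complex.im_le_norm z)
  have := Finset.sum_nonneg fun i (_ : i ∈ Finset.univ) => hlam i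
  unfold imLowerBound
  positivity

lemma contractionFactor_lt_one (hlam : 0 ≤ lam) (hz : 0 < z.im) :
    contractionFactor lam z < 1 :=
  sub_lt_self _ (mul_pos (imLowerBound_pos hlam hz) hz)

lemma contractionFactor_nonneg (hlam : 0 ≤ lam) (hz : 0 < z.im) : 0 ≤ contractionFactor lam z := by
  have hΛ : 0 ≤ z.im⁻¹ * ∑ i, lam i :=
    mul_nonneg (inv_nonneg.mpr hz.le) (Finset.sum_nonneg fun i _ => hlam i)
  have hB : z.im ≤ z.im⁻¹ * ∑ i, lam i + ‖z‖ := by linarith [Complex.im_le_norm z]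
  have : z.im ^ 2 ≤ (z.im⁻¹ * ∑ i, lam i + ‖z‖) ^ 2 := pow_le_pow_left₀ hz.le hB 2
  rw [contractionFactor, imLowerBound, sub_nonneg, div_mul_eq_mul_div, ← sq]
  exact div_le_one_of_le₀ this (sq_nonneg _)

lemma imLowerBound_le_mul_meanInvNormSq [Nonempty ι] (hlam : 0 ≤ lam) (hz : 0 < z.im)
    (hM : 0 ≤ M.im) (hMR : ‖M‖ ≤ z.im⁻¹) :
    imLowerBound lam z ≤ z.im * meanInvNormSq lam z M := by
  set B := z.im⁻¹ * ∑ i, lam i + ‖z‖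
  have hw : ∀ i, ‖M * lam i + z‖ ≤ B := fun i => calc
    ‖M * lam i + z‖ ≤ ‖M‖ * lam i + ‖z‖ := by
      simpa [abs_of_nonneg (hlam i)] using norm_add_le (M * lam i) z
    _ ≤ z.im⁻¹ * ∑ i, lam i + ‖z‖ := by
      gcongr
      · exact hlam i
      · exact Finset.single_le_sum (fun j _ => hlam j) (Finset.mem_univ i)
  have hterm : ∀ i, (B ^ 2)⁻¹ ≤ (normSq (M * lam i + z))⁻¹ := fun i => by
    rw [← Complex.sq_norm]
    have := norm_pos_iff.mpr (mul_ofReal_add_ne_zero (hlam i) hM hz)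
    gcongr
    exact hw i
  have hmean : (B ^ 2)⁻¹ ≤ meanInvNormSq lam z M := by
    rw [meanInvNormSq, le_inv_mul_iff₀ (by positivity)]
    have := Finset.card_nsmul_le_sum Finset.univ _ _ fun i _ => hterm i
    rwa [Finset.card_univ, nsmul_eq_mul] at this
  rw [imLowerBound, div_eq_mul_inv]
  exact mul_le_mul_of_nonneg_left hmean hz.le

lemma im_mul_meanWeightedInvNormSq_le [Nonempty ι] (hlam : 0 ≤ lam) (hz : 0 < z.im)
    (hM : 0 ≤ M.im) (hMR : ‖M‖ ≤ z.im⁻¹) :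
    M.im * meanWeightedInvNormSq lam z M ≤
      contractionFactor lam z * (selfConsistentMap lam z M).im := by
  have hc := imLowerBound_le_mul_meanInvNormSq hlam hz hM hMR
  have hF : z.im * (selfConsistentMap lam z M).im ≤ 1 := by
    have := (Complex.im_le_norm _).trans (norm_selfConsistentMap_le hlam hz hM)
    calc z.im * (selfConsistentMap lam z M).im ≤ z.im * z.im⁻¹ := by gcongr
      _ = 1 := mul_inv_cancel₀ hz.ne'
  have hsplit := im_selfConsistentMap lam z M
  rw [contractionFactor]
  nlinarith [mul_nonneg (imLowerBound_pos hlam hz).le (sub_nonneg.mpr hF)]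

lemma selfConsistentMap_contracts [Nonempty ι] (hlam : 0 ≤ lam) (hz : 0 < z.im)
    (hM₁ : 0 ≤ M₁.im) (hM₁R : ‖M₁‖ ≤ z.im⁻¹) (hM₂ : 0 ≤ M₂.im) (hM₂R : ‖M₂‖ ≤ z.im⁻¹) :
    ‖selfConsistentMap lam z M₁ - selfConsistentMap lam z M₂‖ ^ 2 * (M₁.im * M₂.im) ≤
      contractionFactor lam z ^ 2 * ‖M₁ - M₂‖ ^ 2 *
        ((selfConsistentMap lam z M₁).im * (selfConsistentMap lam z M₂).im) := by
  have h₁ := im_mul_meanWeightedInvNormSq_le hlam hz hM₁ hM₁R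
  have h₂ := im_mul_meanWeightedInvNormSq_le hlam hz hM₂ hM₂R
  have hs₁ := meanWeightedInvNormSq_nonneg (z := z) (M := M₁) hlam
  have hs₂ := meanWeightedInvNormSq_nonneg (z := z) (M := M₂) hlam
  calc _ ≤ ‖M₁ - M₂‖ ^ 2 * (meanWeightedInvNormSq lam z M₁ * meanWeightedInvNormSq lam z M₂) *
          (M₁.im * M₂.im) := by
        gcongr
        exact norm_sub_selfConsistentMap_sq_le hlam
          (fun i => mul_ofReal_add_ne_zero (hlam i) hM₁ hz)
          (fun i => mul_ofReal_add_ne_zero (hlam i) hM₂ hz)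
    _ = ‖M₁ - M₂‖ ^ 2 * ((M₁.im * meanWeightedInvNormSq lam z M₁) *
          (M₂.im * meanWeightedInvNormSq lam z M₂)) := by ring
    _ ≤ ‖M₁ - M₂‖ ^ 2 * ((contractionFactor lam z * (selfConsistentMap lam z M₁).im) *
          (contractionFactor lam z * (selfConsistentMap lam z M₂).im)) := by
        exact mul_le_mul_of_nonneg_left (mul_le_mul h₁ h₂ (mul_nonneg hM₂ hs₂)
          ((mul_nonneg hM₁ hs₁).trans h₁)) (sq_nonneg _)
    _ = _ := by ring

lemma cauchySeq_of_hyperbolic_contraction {u : ℕ → ℂ} {q R : ℝ} (hq₀ : 0 ≤ q) (hq₁ : q < 1)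
    (him : ∀ n, 0 < (u n).im) (hR : ∀ n, (u n).im ≤ R)
    (hstep : ∀ n, ‖u (n + 1) - u (n + 2)‖ ^ 2 * ((u n).im * (u (n + 1)).im) ≤
      q ^ 2 * ‖u n - u (n + 1)‖ ^ 2 * ((u (n + 1)).im * (u (n + 2)).im)) :
    CauchySeq u := by
  set δ : ℕ → ℝ := fun n => ‖u n - u (n + 1)‖ ^ 2 / ((u n).im * (u (n + 1)).im)
  have hδ₀ : ∀ n, 0 ≤ δ n := fun n => div_nonneg (sq_nonneg _) (mul_pos (him n) (him (n + 1))).le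
  have hδ : ∀ n, δ n ≤ (q ^ n) ^ 2 * δ 0 := by
    intro n
    induction n with
    | zero => simp
    | succ n ih =>
      have hpos := mul_pos (him n) (him (n + 1))
      have hpos' := mul_pos (him (n + 1)) (him (n + 2))
      calc δ (n + 1) ≤ q ^ 2 * δ n := by
            simp only [δ]
            rw [div_le_iff₀ hpos', mul_div_assoc', div_mul_eq_mul_div, le_div_iff₀ hpos]
            exact hstep n
        _ ≤ q ^ 2 * ((q ^ n) ^ 2 * δ 0) := by gcongr
        _ = (q ^ (n + 1)) ^ 2 * δ 0 := by ring
  refine cauchySeq_of_le_geometric q (R * √(δ 0)) hq₁ fun n => ?_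
  have hR₀ : 0 ≤ R := (him 0).le.trans (hR 0)
  rw [dist_eq_norm, ← pow_le_pow_iff_left₀ (norm_nonneg _) (by positivity) two_ne_zero]
  have hpos := mul_pos (him n) (him (n + 1))
  calc ‖u n - u (n + 1)‖ ^ 2 = δ n * ((u n).im * (u (n + 1)).im) := by
        rw [div_mul_cancel₀ _ hpos.ne']
    _ ≤ (q ^ n) ^ 2 * δ 0 * (R * R) :=
        mul_le_mul (hδ n) (mul_le_mul (hR n) (hR (n + 1)) (him (n + 1)).le hR₀) hpos.le
          (mul_nonneg (sq_nonneg _) (hδ₀ 0))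
    _ = (R * √(δ 0) * q ^ n) ^ 2 := by
        rw [mul_pow, mul_pow, Real.sq_sqrt (hδ₀ 0)]
        ring

lemma exists_selfConsistentMap_eq [Nonempty ι] (hlam : 0 ≤ lam) (hz : 0 < z.im) :
    ∃ M, 0 < M.im ∧ selfConsistentMap lam z M = M := by
  have hc := imLowerBound_pos hlam hz
  have hF : ∀ M : ℂ, 0 ≤ M.im → ‖M‖ ≤ z.im⁻¹ →
      imLowerBound lam z ≤ (selfConsistentMap lam z M).im ∧
        ‖selfConsistentMap lam z M‖ ≤ z.im⁻¹ := fun M hM hMR =>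
    ⟨(imLowerBound_le_mul_meanInvNormSq hlam hz hM hMR).trans <| by
      rw [im_selfConsistentMap]
      nlinarith [meanWeightedInvNormSq_nonneg (z := z) (M := M) hlam],
     norm_selfConsistentMap_le hlam hz hM⟩
  set u : ℕ → ℂ := fun n => (selfConsistentMap lam z)^[n] (Complex.I * (z.im⁻¹ : ℝ))
  have hsucc : ∀ n, u (n + 1) = selfConsistentMap lam z (u n) := fun n =>
    Function.iterate_succ_apply' _ n _
  have hu : ∀ n, 0 < (u n).im ∧ ‖u n‖ ≤ z.im⁻¹ := by
    intro n
    induction n with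
    | zero => simp [u, abs_of_pos hz, hz]
    | succ n ih =>
      rw [hsucc]
      exact ⟨hc.trans_le (hF _ ih.1.le ih.2).1, (hF _ ih.1.le ih.2).2⟩
  have hCauchy : CauchySeq u := by
    refine cauchySeq_of_hyperbolic_contraction (contractionFactor_nonneg hlam hz)
      (contractionFactor_lt_one hlam hz) (fun n => (hu n).1)
      (fun n => (Complex.im_le_norm _).trans (hu n).2) fun n => ?_
    simpa only [← hsucc] using
      selfConsistentMap_contracts hlam hz (hu n).1.le (hu n).2 (hu (n + 1)).1.le (hu (n + 1)).2
  obtain ⟨M, hM⟩ := cauchySeq_tendsto_of_complete hCauchy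
  have hshift : Tendsto (fun n => u (n + 1)) atTop (nhds M) :=
    hM.comp (tendsto_add_atTop_nat 1)
  have hMim : imLowerBound lam z ≤ M.im :=
    ge_of_tendsto' ((Complex.continuous_im.tendsto M).comp hshift)
      fun n => by simpa only [Function.comp_apply, hsucc] using (hF _ (hu n).1.le (hu n).2).1
  refine ⟨M, hc.trans_le hMim, tendsto_nhds_unique ?_ hshift⟩
  simpa only [Function.comp_def, hsucc] using
    (continuousAt_selfConsistentMap hlam hz (hc.trans_le hMim).le).tendsto.comp hM

lemma existsUnique_selfConsistentMap_eq [Nonempty ι] (hlam : 0 ≤ lam) (hz : 0 < z.im) :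
    ∃! M, 0 < M.im ∧ selfConsistentMap lam z M = M :=
  let ⟨M, hM⟩ := exists_selfConsistentMap_eq hlam hz
  ⟨M, hM, fun _ hM' => eq_of_selfConsistentMap_eq hlam hz hM'.1 hM.1 hM'.2 hM.2⟩

end SelfConsistent

theorem stmt_16_general (f : ℝ → ℂ) (N : ℕ) (hN : 2 ≤ N)
    (hpos : (PhiN f N).PosDef) (z : ℂ) (hz : 0 < z.im) :
    ∃! M : ℂ, 0 < M.im ∧
      IsUnit (M • PhiN f N + z • (1 : Matrix (Fin N) (Fin N) ℂ)) ∧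
      M = -(N : ℂ)⁻¹ * Matrix.trace ((M • PhiN f N + z • (1 : Matrix (Fin N) (Fin N) ℂ))⁻¹) := by
  have hA : (PhiN f N).IsHermitian := hpos.1
  have : Nonempty (Fin N) := ⟨⟨0, by omega⟩⟩
  have hlam : 0 ≤ hA.eigenvalues := fun i => (hpos.eigenvalues_pos i).le
  refine (existsUnique_congr fun M => and_congr_right fun hM => ?_).mpr
    (existsUnique_selfConsistentMap_eq hlam hz)
  have hw := fun i => mul_ofReal_add_ne_zero (hlam i) hM.le hz
  rw [hA.trace_inv_smul_add_smul_one hw, selfConsistentMap, Fintype.card_fin, eq_comm]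
  exact and_iff_right (hA.isUnit_smul_add_smul_one hw)

theorem stmt_16 (f : ℝ → ℂ) (hf : Admissible f) (N : ℕ) (hN : 2 ≤ N)
    (hpos : (PhiN f N).PosDef) (z : ℂ) (hz : 0 < z.im) :
    ∃! M : ℂ, 0 < M.im ∧
      IsUnit (M • PhiN f N + z • (1 : Matrix (Fin N) (Fin N) ℂ)) ∧
      M = -(N : ℂ)⁻¹ * Matrix.trace ((M • PhiN f N + z • (1 : Matrix (Fin N) (Fin N) ℂ))⁻¹) :=
  stmt_16_general f N hN hpos z hz
end

section
/- Let f : ℝ/ℤ → ℂ be of class C² with c₀ = ∫₀¹ f = 0. If there exists an odd integer n ≥ 1 such that |c_n| > Σ_{k=1}^∞ |c_{n·2^k}|, then f is an admissible evaluation function; in particular inf_{x∈[0,1]} g_f(x) > 0. -/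
open MeasureTheory Complex Filter ProbabilityTheory Matrix
open scoped ENNReal NNReal ComplexOrder

/-! Integrating by parts twice gives `|c_m| ≤ C / m²` for a `C²` periodic `f`, hence
`|c_{m 2^k}| ≤ C m⁻² 4⁻ᵏ`: every inner series of `g_f` converges absolutely with modulus
`O(m⁻²)`, so the outer series converges. At the distinguished odd `n` the inner sum has modulus
at least `|c_n| - ∑_{k ≥ 1} |c_{n 2^k}| > 0` for every `x`, and `g_f(x)` dominates the square
of that single term. -/

open Real

lemma Function.Periodic.deriv {𝕜 F : Type*} [NontriviallyNormedField 𝕜] [NormedAddCommGroup F]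
    [NormedSpace 𝕜 F] {g : 𝕜 → F} {c : 𝕜} (hg : Function.Periodic g c) :
    Function.Periodic (deriv g) c := fun x => by
  rw [← deriv_comp_add_const, hg.funext]

lemma norm_fourierCoeffOn_le {E : Type*} [NormedAddCommGroup E] [NormedSpace ℂ E] {a b : ℝ}
    (hab : a < b) {f : ℝ → E} {M : ℝ} (hf : ∀ x ∈ Set.Icc a b, ‖f x‖ ≤ M) (n : ℤ) :
    ‖fourierCoeffOn hab f n‖ ≤ M := by
  have hba : 0 < b - a := sub_pos.mpr hab
  have hint : ‖∫ x in a..b, fourier (-n) (x : AddCircle (b - a)) • f x‖ ≤ M * (b - a) := by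
    rw [← abs_of_pos hba]
    refine intervalIntegral.norm_integral_le_of_norm_le_const fun x hx => ?_
    rw [Set.uIoc_of_le hab.le] at hx
    rw [norm_smul, fourier_apply, Circle.norm_coe, one_mul]
    exact hf x (Set.Ioc_subset_Icc_self hx)
  rw [fourierCoeffOn_eq_integral, norm_smul, Real.norm_of_nonneg (by positivity)]
  calc 1 / (b - a) * ‖∫ x in a..b, fourier (-n) (x : AddCircle (b - a)) • f x‖
      ≤ 1 / (b - a) * (M * (b - a)) := by gcongr
    _ = M := by field_simp

lemma norm_fourierCoeffOn_eq_of_hasDerivAt {a b : ℝ} (hab : a < b) {f f' : ℝ → ℂ} {n : ℤ}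
    (hn : n ≠ 0) (hf : ∀ x ∈ Set.uIcc a b, HasDerivAt f (f' x) x)
    (hf' : IntervalIntegrable f' volume a b) (hfab : f a = f b) :
    ‖fourierCoeffOn hab f n‖ = (b - a) / (2 * π * |(n : ℝ)|) * ‖fourierCoeffOn hab f' n‖ := by
  rw [fourierCoeffOn_of_hasDerivAt hab hn hf hf', hfab, sub_self, mul_zero, zero_sub]
  simp only [neg_mul, one_div, inv_neg, _root_.mul_inv_rev, inv_I, mul_neg, neg_neg, norm_neg,
    Complex.norm_mul, norm_inv, norm_intCast, norm_I, norm_real, norm_eq_abs, abs_of_pos pi_pos,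
    Complex.norm_ofNat, one_mul]
  rw [← ofReal_sub, norm_real, Real.norm_of_nonneg (sub_pos.mpr hab).le]
  ring

lemma norm_fourierCoeffOn_eq_of_periodic {a b : ℝ} (hab : a < b) {g : ℝ → ℂ}
    (hg : ContDiff ℝ 1 g) (hp : Function.Periodic g (b - a)) {n : ℤ} (hn : n ≠ 0) :
    ‖fourierCoeffOn hab g n‖ =
      (b - a) / (2 * π * |(n : ℝ)|) * ‖fourierCoeffOn hab (deriv g) n‖ := by
  refine norm_fourierCoeffOn_eq_of_hasDerivAt hab hn
    (fun x _ => (hg.differentiable one_ne_zero x).hasDerivAt)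
    ((hg.continuous_deriv le_rfl).intervalIntegrable _ _) ?_
  simpa using (hp a).symm

lemma exists_norm_fourierCoeffOn_le_div_sq {a b : ℝ} (hab : a < b) {f : ℝ → ℂ}
    (hf : ContDiff ℝ 2 f) (hp : Function.Periodic f (b - a)) :
    ∃ C, ∀ n : ℤ, n ≠ 0 → ‖fourierCoeffOn hab f n‖ ≤ C / (n : ℝ) ^ 2 := by
  have hf' : ContDiff ℝ 1 (deriv f) := (contDiff_succ_iff_deriv.mp hf).2.2
  obtain ⟨M, hM⟩ := isCompact_Icc.exists_bound_of_continuousOn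
    (hf'.continuous_deriv le_rfl).continuousOn (s := Set.Icc a b)
  refine ⟨((b - a) / (2 * π)) ^ 2 * M, fun n hn => ?_⟩
  have hba : 0 < b - a := sub_pos.mpr hab
  rw [norm_fourierCoeffOn_eq_of_periodic hab (hf.of_le (by norm_num)) hp hn,
    norm_fourierCoeffOn_eq_of_periodic hab hf' hp.deriv hn]
  calc (b - a) / (2 * π * |(n : ℝ)|) *
        ((b - a) / (2 * π * |(n : ℝ)|) * ‖fourierCoeffOn hab (deriv (deriv f)) n‖)
      ≤ (b - a) / (2 * π * |(n : ℝ)|) * ((b - a) / (2 * π * |(n : ℝ)|) * M) := by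
        gcongr
        exact norm_fourierCoeffOn_le hab hM n
    _ = ((b - a) / (2 * π)) ^ 2 * M / (n : ℝ) ^ 2 := by
        rw [← sq_abs (n : ℝ)]
        field_simp

lemma fCoeff_eq_fourierCoeffOn (f : ℝ → ℂ) (k : ℤ) :
    fCoeff f k = fourierCoeffOn zero_lt_one f k := by
  rw [fourierCoeffOn_eq_integral, fCoeff]
  have h : ∀ y : ℝ, fourier (-k) (y : AddCircle ((1 : ℝ) - 0)) • f y
      = f y * Complex.exp (-(2 * (π : ℂ) * Complex.I * k * y)) := by
    intro y
    rw [fourier_coe_apply, smul_eq_mul, mul_comm]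
    congr 1
    push_cast
    ring_nf
  simp_rw [h]
  norm_num

lemma exists_norm_fCoeff_le_div_sq {f : ℝ → ℂ} (hp : Function.Periodic f 1)
    (hf : ContDiff ℝ 2 f) : ∃ C, ∀ m : ℤ, m ≠ 0 → ‖fCoeff f m‖ ≤ C / (m : ℝ) ^ 2 := by
  simp_rw [fCoeff_eq_fourierCoeffOn]
  exact exists_norm_fourierCoeffOn_le_div_sq zero_lt_one hf (by rwa [sub_zero])

lemma norm_sub_tsum_norm_succ_le_norm_tsum {E : Type*} [NormedAddCommGroup E] [CompleteSpace E]
    {b : ℕ → E} (hb : Summable fun k => ‖b k‖) :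
    ‖b 0‖ - ∑' k, ‖b (k + 1)‖ ≤ ‖∑' k, b k‖ := by
  have htail := norm_tsum_le_tsum_norm ((summable_nat_add_iff (f := fun k => ‖b k‖) 1).mpr hb)
  rw [hb.of_norm.tsum_eq_zero_add]
  have := norm_sub_norm_le (b 0) (-∑' k, b (k + 1))
  rw [norm_neg, sub_neg_eq_add] at this
  linarith

lemma norm_mul_exp_two_pi_I_mul_mul (c : ℂ) (k : ℕ) (x : ℝ) :
    ‖c * Complex.exp (2 * (π : ℂ) * Complex.I * k * x)‖ = ‖c‖ := by
  rw [norm_mul, show 2 * (π : ℂ) * Complex.I * k * x = ((2 * π * k * x : ℝ) : ℂ) * Complex.I by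
    push_cast; ring, Complex.norm_exp_ofReal_mul_I, mul_one]

noncomputable def dyadicSum (f : ℝ → ℂ) (n : ℕ) (x : ℝ) : ℂ :=
  ∑' k : ℕ, fCoeff f ((n : ℤ) * 2 ^ k) *
    Complex.exp (2 * (π : ℂ) * Complex.I * (k : ℂ) * (x : ℂ))

lemma norm_fCoeff_sub_tsum_le_norm_dyadicSum {f : ℝ → ℂ} {n : ℕ}
    (hs : Summable fun k : ℕ => ‖fCoeff f ((n : ℤ) * 2 ^ k)‖) (x : ℝ) :
    ‖fCoeff f n‖ - ∑' k : ℕ, ‖fCoeff f ((n : ℤ) * 2 ^ (k + 1))‖ ≤ ‖dyadicSum f n x‖ := by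
  have := norm_sub_tsum_norm_succ_le_norm_tsum (b := fun k : ℕ => fCoeff f ((n : ℤ) * 2 ^ k) *
    Complex.exp (2 * (π : ℂ) * Complex.I * (k : ℂ) * x))
    (by simpa only [norm_mul_exp_two_pi_I_mul_mul] using hs)
  simp only [norm_mul_exp_two_pi_I_mul_mul] at this
  simp only [pow_zero, mul_one] at this
  exact this

lemma norm_dyadicSum_le_tsum_norm {f : ℝ → ℂ} {n : ℕ}
    (hs : Summable fun k : ℕ => ‖fCoeff f ((n : ℤ) * 2 ^ k)‖) (x : ℝ) :
    ‖dyadicSum f n x‖ ≤ ∑' k : ℕ, ‖fCoeff f ((n : ℤ) * 2 ^ k)‖ := by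
  have := norm_tsum_le_tsum_norm (f := fun k : ℕ => fCoeff f ((n : ℤ) * 2 ^ k) *
    Complex.exp (2 * (π : ℂ) * Complex.I * (k : ℂ) * x))
    (by simpa only [norm_mul_exp_two_pi_I_mul_mul] using hs)
  simp only [norm_mul_exp_two_pi_I_mul_mul] at this
  exact this

section Decay

variable {f : ℝ → ℂ} {C : ℝ} (hC : ∀ m : ℤ, m ≠ 0 → ‖fCoeff f m‖ ≤ C / (m : ℝ) ^ 2)
include hC

lemma norm_fCoeff_mul_two_pow_le {m : ℕ} (hm : m ≠ 0) (k : ℕ) :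
    ‖fCoeff f ((m : ℤ) * 2 ^ k)‖ ≤ C / (m : ℝ) ^ 2 * (1 / 4) ^ k := by
  refine (hC _ (by positivity)).trans_eq ?_
  push_cast
  rw [mul_pow, ← pow_mul, mul_comm k, pow_mul]
  field_simp
  rw [mul_assoc, ← mul_pow]
  norm_num

lemma summable_norm_fCoeff_mul_two_pow {m : ℕ} (hm : m ≠ 0) :
    Summable fun k : ℕ => ‖fCoeff f ((m : ℤ) * 2 ^ k)‖ :=
  .of_nonneg_of_le (fun _ => norm_nonneg _) (norm_fCoeff_mul_two_pow_le hC hm)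
    ((summable_geometric_of_lt_one (by norm_num) (by norm_num)).mul_left _)

lemma norm_dyadicSum_le {m : ℕ} (hm : m ≠ 0) (x : ℝ) :
    ‖dyadicSum f m x‖ ≤ C / (m : ℝ) ^ 2 * (4 / 3) := by
  have hs := summable_norm_fCoeff_mul_two_pow hC hm
  calc ‖dyadicSum f m x‖ ≤ ∑' k : ℕ, ‖fCoeff f ((m : ℤ) * 2 ^ k)‖ :=
        norm_dyadicSum_le_tsum_norm hs x
    _ ≤ ∑' k : ℕ, C / (m : ℝ) ^ 2 * (1 / 4) ^ k :=
        hs.tsum_le_tsum (norm_fCoeff_mul_two_pow_le hC hm)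
          ((summable_geometric_of_lt_one (by norm_num) (by norm_num)).mul_left _)
    _ = C / (m : ℝ) ^ 2 * (4 / 3) := by
        rw [tsum_mul_left, tsum_geometric_of_lt_one (by norm_num) (by norm_num)]
        norm_num

lemma summable_gFun_terms (x : ℝ) :
    Summable fun n : ℕ => if Odd n then ‖dyadicSum f n x‖ ^ 2 else 0 := by
  refine .of_nonneg_of_le (fun n => by split_ifs <;> positivity) (fun n => ?_)
    ((Real.summable_one_div_nat_pow.mpr (by norm_num : 1 < 4)).mul_left ((C * (4 / 3)) ^ 2))
  split_ifs with hn
  · calc ‖dyadicSum f n x‖ ^ 2 ≤ (C / (n : ℝ) ^ 2 * (4 / 3)) ^ 2 :=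
          pow_le_pow_left₀ (norm_nonneg _) (norm_dyadicSum_le hC hn.pos.ne' x) 2
      _ = (C * (4 / 3)) ^ 2 * (1 / (n : ℝ) ^ 4) := by ring
  · positivity

end Decay

theorem stmt_19_general (f : ℝ → ℂ) (hper : Function.Periodic f 1) (hf2 : ContDiff ℝ 2 f)
    (hmean : (∫ y in (0:ℝ)..1, f y) = 0)
    (n : ℕ) (hodd : Odd n)
    (hgap : ∑' k : ℕ, ‖fCoeff f ((n : ℤ) * 2 ^ (k + 1))‖ <
      ‖fCoeff f (n : ℤ)‖) :
    Admissible f := by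
  obtain ⟨C, hC⟩ := exists_norm_fCoeff_le_div_sq hper hf2
  set ε := ‖fCoeff f n‖ - ∑' k : ℕ, ‖fCoeff f ((n : ℤ) * 2 ^ (k + 1))‖
  have hε : 0 < ε := sub_pos.mpr hgap
  refine ⟨hper, hf2, hmean, ε ^ 2, by positivity, fun x _ => ?_⟩
  calc ε ^ 2 ≤ ‖dyadicSum f n x‖ ^ 2 := pow_le_pow_left₀ hε.le
        (norm_fCoeff_sub_tsum_le_norm_dyadicSum
          (summable_norm_fCoeff_mul_two_pow hC hodd.pos.ne') x) 2
    _ = if Odd n then ‖dyadicSum f n x‖ ^ 2 else 0 := (if_pos hodd).symm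
    _ ≤ gFun f x :=
        (summable_gFun_terms hC x).le_tsum n fun m _ => by split_ifs <;> positivity

theorem stmt_19 (f : ℝ → ℂ) (hper : Function.Periodic f 1) (hf2 : ContDiff ℝ 2 f)
    (hmean : (∫ y in (0:ℝ)..1, f y) = 0)
    (n : ℕ) (hn : 1 ≤ n) (hodd : Odd n)
    (hgap : ∑' k : ℕ, ‖fCoeff f ((n : ℤ) * 2 ^ (k + 1))‖ <
      ‖fCoeff f (n : ℤ)‖) :
    Admissible f :=
  stmt_19_general f hper hf2 hmean n hodd hgap
end
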